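/- One-dimensional counterexample to weak unique continuation: Let s ∈ (0,1) and h > 0. Then there exist a sequence u = {u_j}_{j∈ℤ} ∈ ℓ_s, not identically zero, and a bounded sequence V = {V_j}_{j∈ℤ} such that (−Δ_d)^s u_j = V_j u_j for all j ∈ ℤ, while u_j = 0 for all j ∈ {−1,0,1}. -/

import Mathlib

/-!
Take the odd sequence `u` that is `1` for `j ≥ 3`, `c` at `j = 2` and `0` on `{-1, 0, 1}`.
Since the kernel is even, `(-Δ_d)^s u` is odd and vanishes at `0`. At `j = 1`, pairing `m`
with its reflection `2 - m` turns the series into a finite sum, which equals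
`-(c (K(1) - K(3)) + K(2) + K(3))`; it vanishes for a suitable `c` because the kernel
strictly decreases on `ℕ`. Finally `V := (-Δ_d)^s u / u` is bounded: `u` is bounded, the kernel
is summable (its Gamma quotients telescope), and `|u|` is bounded below off `{-1, 0, 1}`.
-/

open scoped BigOperators

/-- The explicit one-dimensional discrete kernel `K_s^h(m)`, with `K_s^h(0) = 0`. -/
noncomputable def Ks1 (h s : ℝ) (m : ℤ) : ℝ :=
  if m = 0 then 0
  else (4 ^ s * Real.Gamma (1 / 2 + s) / (Real.sqrt Real.pi * |Real.Gamma (-s)|)) *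
    (Real.Gamma ((m.natAbs : ℝ) - s) / (h ^ (2 * s) * Real.Gamma ((m.natAbs : ℝ) + 1 + s)))

/-- Membership in the one-dimensional space `ℓ_s`. -/
def memLs1 (s : ℝ) (u : ℤ → ℝ) : Prop :=
  Summable fun m : ℤ => |u m| * (1 + (m.natAbs : ℝ)) ^ (-(1 + 2 * s))

/-- The one-dimensional fractional discrete Laplacian. -/
noncomputable def fracLap1 (h s : ℝ) (u : ℤ → ℝ) (j : ℤ) : ℝ :=
  ∑' m : ℤ, (u j - u m) * Ks1 h s (j - m)

namespace Ks1

noncomputable def coeff (s : ℝ) : ℝ :=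
  4 ^ s * Real.Gamma (1 / 2 + s) / (Real.sqrt Real.pi * |Real.Gamma (-s)|)

lemma coeff_pos {s : ℝ} (hs0 : 0 < s) (hs1 : s < 1) : 0 < coeff s := by
  have hΓ : Real.Gamma (-s) ≠ 0 := Real.Gamma_ne_zero fun m hm => by
    rcases m with _ | m
    · simp only [CharP.cast_eq_zero, neg_zero, neg_eq_zero] at hm; linarith
    · push_cast at hm; linarith [(m.cast_nonneg : (0 : ℝ) ≤ m)]
  unfold coeff
  have := Real.Gamma_pos_of_pos (show 0 < 1 / 2 + s by linarith)
  have := Real.pi_pos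
  positivity

noncomputable def telescope (h s : ℝ) (n : ℕ) : ℝ :=
  coeff s * (Real.Gamma (n + 1 - s) / (h ^ (2 * s) * Real.Gamma (n + 1 + s)))

lemma telescope_nonneg {h s : ℝ} (hh : 0 < h) (hs0 : 0 < s) (hs1 : s < 1) (n : ℕ) :
    0 ≤ telescope h s n :=
  mul_nonneg (coeff_pos hs0 hs1).le <| div_nonneg (Real.Gamma_pos_of_pos (by linarith)).le <|
    mul_nonneg (Real.rpow_pos_of_pos hh _).le (Real.Gamma_pos_of_pos (by linarith)).le

end Ks1

lemma Ks1_neg (h s : ℝ) (m : ℤ) : Ks1 h s (-m) = Ks1 h s m := by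
  simp [Ks1, Int.natAbs_neg]

lemma Ks1_pos {h s : ℝ} (hh : 0 < h) (hs0 : 0 < s) (hs1 : s < 1) {m : ℤ} (hm : m ≠ 0) :
    0 < Ks1 h s m := by
  have hm1 : (1 : ℝ) ≤ m.natAbs := by exact_mod_cast Int.natAbs_pos.mpr hm
  rw [Ks1, if_neg hm]
  exact mul_pos (Ks1.coeff_pos hs0 hs1) <| div_pos (Real.Gamma_pos_of_pos (by linarith)) <|
    mul_pos (Real.rpow_pos_of_pos hh _) (Real.Gamma_pos_of_pos (by linarith))

lemma Ks1_nonneg {h s : ℝ} (hh : 0 < h) (hs0 : 0 < s) (hs1 : s < 1) (m : ℤ) :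
    0 ≤ Ks1 h s m := by
  rcases eq_or_ne m 0 with rfl | hm
  · simp [Ks1]
  · exact (Ks1_pos hh hs0 hs1 hm).le

lemma Ks1_natCast_add_one (h s : ℝ) (n : ℕ) :
    Ks1 h s (n + 1) =
      Ks1.coeff s * (Real.Gamma (n + 1 - s) / (h ^ (2 * s) * Real.Gamma (n + 2 + s))) := by
  have hn : ((n : ℤ) + 1).natAbs = n + 1 := by omega
  rw [Ks1, if_neg (by omega), hn, Ks1.coeff]
  push_cast
  ring_nf

lemma two_mul_Ks1_natCast_add_one {h s : ℝ} (hh : 0 < h) (hs0 : 0 < s) (hs1 : s < 1) (n : ℕ) :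
    2 * s * Ks1 h s (n + 1) = Ks1.telescope h s n - Ks1.telescope h s (n + 1) := by
  have hΓ_add : Real.Gamma (n + 2 + s) = (n + 1 + s) * Real.Gamma (n + 1 + s) := by
    rw [← Real.Gamma_add_one (by positivity)]; ring_nf
  have hΓ_sub : Real.Gamma (n + 2 - s) = (n + 1 - s) * Real.Gamma (n + 1 - s) := by
    rw [← Real.Gamma_add_one (by linarith)]; ring_nf
  have : Real.Gamma (n + 1 + s) ≠ 0 := (Real.Gamma_pos_of_pos (by positivity)).ne'
  have : h ^ (2 * s) ≠ 0 := (Real.rpow_pos_of_pos hh _).ne'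
  rw [Ks1_natCast_add_one, Ks1.telescope, Ks1.telescope]
  push_cast
  rw [show (n : ℝ) + 1 + 1 - s = n + 2 - s by ring, show (n : ℝ) + 1 + 1 + s = n + 2 + s by ring,
    hΓ_add, hΓ_sub]
  field_simp
  ring

lemma Ks1_natCast_add_two_lt {h s : ℝ} (hh : 0 < h) (hs0 : 0 < s) (hs1 : s < 1) (n : ℕ) :
    Ks1 h s (n + 2) < Ks1 h s (n + 1) := by
  have hratio : (n + 2 + s) * Ks1 h s (n + 2) = (n + 1 - s) * Ks1 h s (n + 1) := by
    have hΓ_add : Real.Gamma (n + 1 + 2 + s) = (n + 2 + s) * Real.Gamma (n + 2 + s) := by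
      rw [← Real.Gamma_add_one (by positivity)]; ring_nf
    have hΓ_sub : Real.Gamma (n + 1 + 1 - s) = (n + 1 - s) * Real.Gamma (n + 1 - s) := by
      rw [← Real.Gamma_add_one (by linarith)]; ring_nf
    have : Real.Gamma (n + 2 + s) ≠ 0 := (Real.Gamma_pos_of_pos (by positivity)).ne'
    have : h ^ (2 * s) ≠ 0 := (Real.rpow_pos_of_pos hh _).ne'
    rw [show ((n : ℤ) + 2) = ((n + 1 : ℕ) : ℤ) + 1 by push_cast; ring, Ks1_natCast_add_one,
      Ks1_natCast_add_one]
    push_cast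
    rw [hΓ_add, hΓ_sub]
    field_simp
  have hpos : 0 < Ks1 h s (n + 2) := Ks1_pos hh hs0 hs1 (by omega)
  nlinarith [(n.cast_nonneg : (0 : ℝ) ≤ n)]

lemma Ks1_three_lt_one {h s : ℝ} (hh : 0 < h) (hs0 : 0 < s) (hs1 : s < 1) :
    Ks1 h s 3 < Ks1 h s 1 := by
  have h21 : Ks1 h s 2 < Ks1 h s 1 := by simpa using Ks1_natCast_add_two_lt hh hs0 hs1 0
  have h32 : Ks1 h s 3 < Ks1 h s 2 := by simpa using Ks1_natCast_add_two_lt hh hs0 hs1 1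
  exact h32.trans h21

lemma summable_Ks1 {h s : ℝ} (hh : 0 < h) (hs0 : 0 < s) (hs1 : s < 1) : Summable (Ks1 h s) := by
  have hpos : Summable fun n : ℕ => Ks1 h s (n + 1) := by
    refine summable_of_sum_range_le (c := Ks1.telescope h s 0 / (2 * s))
      (fun n => Ks1_nonneg hh hs0 hs1 _) fun n => ?_
    have hsum : 2 * s * ∑ i ∈ Finset.range n, Ks1 h s (i + 1) =
        Ks1.telescope h s 0 - Ks1.telescope h s n := by
      rw [Finset.mul_sum, Finset.sum_congr rfl fun i _ => two_mul_Ks1_natCast_add_one hh hs0 hs1 i,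
        Finset.sum_range_sub']
    rw [le_div_iff₀ (by positivity), mul_comm]
    linarith [Ks1.telescope_nonneg hh hs0 hs1 n]
  have hnat : Summable fun n : ℕ => Ks1 h s n :=
    (summable_nat_add_iff 1).mp (by exact_mod_cast hpos)
  exact .of_nat_of_neg hnat (by simpa only [Ks1_neg] using hnat)

lemma fracLap1_neg_of_odd (h s : ℝ) {u : ℤ → ℝ} (hu : ∀ j, u (-j) = -u j) (j : ℤ) :
    fracLap1 h s u (-j) = -fracLap1 h s u j := by
  rw [fracLap1, fracLap1, ← tsum_neg, ← (Equiv.neg ℤ).tsum_eq]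
  congr 1 with m
  rw [Equiv.neg_apply, hu, hu, show -j - -m = -(j - m) by ring, Ks1_neg]
  ring

lemma fracLap1_zero_of_odd (h s : ℝ) {u : ℤ → ℝ} (hu : ∀ j, u (-j) = -u j) :
    fracLap1 h s u 0 = 0 := by
  have := fracLap1_neg_of_odd h s hu 0
  rw [neg_zero] at this
  linarith

lemma fracLap1_eq_tsum_secondDiff (h s : ℝ) {u : ℤ → ℝ} {j : ℤ}
    (hsum : Summable fun m => (u j - u m) * Ks1 h s (j - m)) :
    fracLap1 h s u j = (∑' m, (2 * u j - u m - u (2 * j - m)) * Ks1 h s (j - m)) / 2 := by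
  have hreflect : ∀ m, (u j - u (2 * j - m)) * Ks1 h s (j - (2 * j - m)) =
      (u j - u (2 * j - m)) * Ks1 h s (j - m) := fun m => by
    rw [show j - (2 * j - m) = -(j - m) by ring, Ks1_neg]
  have hsum' := (hsum.comp_injective (Equiv.subLeft (2 * j)).injective).congr hreflect
  have htsum : ∑' m, (u j - u (2 * j - m)) * Ks1 h s (j - m) = fracLap1 h s u j := by
    simp only [← hreflect]
    exact (Equiv.subLeft (2 * j)).tsum_eq fun m => (u j - u m) * Ks1 h s (j - m)
  rw [show (fun m => (2 * u j - u m - u (2 * j - m)) * Ks1 h s (j - m)) = fun m =>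
      (u j - u m) * Ks1 h s (j - m) + (u j - u (2 * j - m)) * Ks1 h s (j - m) by ext; ring,
    hsum.tsum_add hsum', htsum, fracLap1]
  ring

section Bounded

variable {h s B : ℝ} {u : ℤ → ℝ}

lemma abs_fracLap1_term_le (hh : 0 < h) (hs0 : 0 < s) (hs1 : s < 1) (hu : ∀ m, |u m| ≤ B)
    (j m : ℤ) : |(u j - u m) * Ks1 h s (j - m)| ≤ 2 * B * Ks1 h s (j - m) := by
  rw [abs_mul, abs_of_nonneg (Ks1_nonneg hh hs0 hs1 _)]
  gcongr
  · exact Ks1_nonneg hh hs0 hs1 _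
  · linarith [abs_sub (u j) (u m), hu j, hu m]

lemma hasSum_Ks1_sub (hh : 0 < h) (hs0 : 0 < s) (hs1 : s < 1) (j : ℤ) :
    HasSum (fun m => Ks1 h s (j - m)) (∑' m, Ks1 h s m) := by
  rw [← (Equiv.subLeft j).tsum_eq]
  exact ((summable_Ks1 hh hs0 hs1).comp_injective (Equiv.subLeft j).injective).hasSum

lemma summable_fracLap1_term (hh : 0 < h) (hs0 : 0 < s) (hs1 : s < 1) (hu : ∀ m, |u m| ≤ B)
    (j : ℤ) : Summable fun m => (u j - u m) * Ks1 h s (j - m) :=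
  .of_norm_bounded ((hasSum_Ks1_sub hh hs0 hs1 j).summable.mul_left (2 * B))
    (abs_fracLap1_term_le hh hs0 hs1 hu j)

lemma abs_fracLap1_le (hh : 0 < h) (hs0 : 0 < s) (hs1 : s < 1) (hu : ∀ m, |u m| ≤ B) (j : ℤ) :
    |fracLap1 h s u j| ≤ 2 * B * ∑' m, Ks1 h s m :=
  tsum_of_norm_bounded (f := fun m => (u j - u m) * Ks1 h s (j - m))
    ((hasSum_Ks1_sub hh hs0 hs1 j).mul_left (2 * B))
    (abs_fracLap1_term_le hh hs0 hs1 hu j)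

lemma memLs1_of_bounded (hs0 : 0 < s) (hu : ∀ m, |u m| ≤ B) : memLs1 s u := by
  have hnat : Summable fun n : ℕ => (1 + (n : ℝ)) ^ (-(1 + 2 * s)) := by
    refine ((Real.summable_one_div_nat_add_rpow 1 (1 + 2 * s)).mpr (by linarith)).congr fun n => ?_
    rw [Real.rpow_neg (by positivity), abs_of_nonneg (by positivity), one_div, add_comm]
  have hint : Summable fun m : ℤ => (1 + (m.natAbs : ℝ)) ^ (-(1 + 2 * s)) :=
    .of_nat_of_neg (by simpa using hnat) (by simpa using hnat)
  refine .of_nonneg_of_le (fun m => by positivity) (fun m => ?_) (hint.mul_left B)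
  exact mul_le_mul_of_nonneg_right (hu m) (by positivity)

end Bounded

lemma exists_bounded_mul_eq {ι : Type*} {f u : ι → ℝ} {A δ : ℝ} (hδ : 0 < δ)
    (hf : ∀ j, |f j| ≤ A) (hu : ∀ j, u j ≠ 0 → δ ≤ |u j|) (hfu : ∀ j, u j = 0 → f j = 0) :
    ∃ V : ι → ℝ, (∃ C, ∀ j, |V j| ≤ C) ∧ ∀ j, f j = V j * u j := by
  refine ⟨fun j => f j / u j, ⟨A / δ, fun j => ?_⟩, fun j => ?_⟩ <;> dsimp only <;>
    rcases eq_or_ne (u j) 0 with hj | hj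
  · rw [hj, div_zero, abs_zero]
    exact div_nonneg ((abs_nonneg _).trans (hf j)) hδ.le
  · rw [abs_div]
    exact div_le_div₀ ((abs_nonneg _).trans (hf j)) (hf j) hδ (hu j hj)
  · rw [hj, mul_zero, hfu j hj]
  · rw [div_mul_cancel₀ _ hj]

def oddStepSeq (c : ℝ) (j : ℤ) : ℝ :=
  if 3 ≤ j then 1 else if j = 2 then c else if j = -2 then -c else if j ≤ -3 then -1 else 0

section oddStepSeq

variable (c : ℝ)

lemma oddStepSeq_neg (j : ℤ) : oddStepSeq c (-j) = -oddStepSeq c j := by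
  unfold oddStepSeq
  split_ifs <;> first | omega | simp

lemma abs_oddStepSeq_le (j : ℤ) : |oddStepSeq c j| ≤ max 1 |c| := by
  unfold oddStepSeq
  split_ifs <;> simp

lemma le_abs_oddStepSeq {j : ℤ} (hj : oddStepSeq c j ≠ 0) : min 1 |c| ≤ |oddStepSeq c j| := by
  unfold oddStepSeq at *
  split_ifs at * <;> simp_all

lemma oddStepSeq_eq_zero_iff {c : ℝ} (hc : c ≠ 0) (j : ℤ) :
    oddStepSeq c j = 0 ↔ j = -1 ∨ j = 0 ∨ j = 1 := by
  unfold oddStepSeq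
  split_ifs <;> simp [hc] <;> omega

lemma oddStepSeq_ne_zero : oddStepSeq c ≠ 0 :=
  fun h => by simpa [oddStepSeq] using congrFun h 3

end oddStepSeq

lemma fracLap1_oddStepSeq_one {h s : ℝ} (hh : 0 < h) (hs0 : 0 < s) (hs1 : s < 1) (c : ℝ) :
    fracLap1 h s (oddStepSeq c) 1 =
      -(c * (Ks1 h s 1 - Ks1 h s 3) + Ks1 h s 2 + Ks1 h s 3) := by
  rw [fracLap1_eq_tsum_secondDiff h s
    (summable_fracLap1_term hh hs0 hs1 (abs_oddStepSeq_le c) 1)]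
  have hone : oddStepSeq c 1 = 0 := by simp [oddStepSeq]
  rw [hone, mul_zero, mul_one, tsum_eq_sum (s := {-2, -1, 0, 1, 2, 3, 4}) fun m hm => by
    simp only [Finset.mem_insert, Finset.mem_singleton, not_or] at hm
    unfold oddStepSeq
    split_ifs <;> first | omega | ring]
  simp +decide only [Finset.sum_insert, Finset.mem_insert, Finset.mem_singleton,
    Finset.sum_singleton, oddStepSeq, ↓reduceIte, Int.reduceSub, Ks1_neg]
  ring

/-- One-dimensional counterexample to weak unique continuation:
there are a nontrivial `u ∈ ℓ_s` and a bounded potential `V` with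
`(-Δ_d)^s u = V u` on all of `ℤ` and `u = 0` on `{-1,0,1}`. -/
theorem one_dim_failure_WUCP (h s : ℝ) (hh : 0 < h) (hs : s ∈ Set.Ioo (0 : ℝ) 1) :
    ∃ u V : ℤ → ℝ, u ≠ 0 ∧ memLs1 s u ∧ (∃ C : ℝ, ∀ j, |V j| ≤ C) ∧
      (∀ j : ℤ, fracLap1 h s u j = V j * u j) ∧
      (∀ j : ℤ, (j = -1 ∨ j = 0 ∨ j = 1) → u j = 0) := by
  obtain ⟨hs0, hs1⟩ := hs
  have hK13 : Ks1 h s 1 - Ks1 h s 3 ≠ 0 := sub_ne_zero.2 (Ks1_three_lt_one hh hs0 hs1).ne'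
  set c := -(Ks1 h s 2 + Ks1 h s 3) / (Ks1 h s 1 - Ks1 h s 3)
  have hK2 : 0 < Ks1 h s 2 := Ks1_pos hh hs0 hs1 two_ne_zero
  have hK3 : 0 < Ks1 h s 3 := Ks1_pos hh hs0 hs1 three_ne_zero
  have hc : c ≠ 0 := div_ne_zero (by linarith) hK13
  have hone : fracLap1 h s (oddStepSeq c) 1 = 0 := by
    rw [fracLap1_oddStepSeq_one hh hs0 hs1, div_mul_cancel₀ _ hK13]
    ring
  have hzero : ∀ j, oddStepSeq c j = 0 → fracLap1 h s (oddStepSeq c) j = 0 := fun j hj => by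
    rcases (oddStepSeq_eq_zero_iff hc j).1 hj with rfl | rfl | rfl
    · rw [fracLap1_neg_of_odd h s (oddStepSeq_neg c), hone, neg_zero]
    · exact fracLap1_zero_of_odd h s (oddStepSeq_neg c)
    · exact hone
  obtain ⟨V, hV, hLap⟩ := exists_bounded_mul_eq (lt_min one_pos (abs_pos.2 hc))
    (abs_fracLap1_le hh hs0 hs1 (abs_oddStepSeq_le c)) (fun _ => le_abs_oddStepSeq c) hzero
  exact ⟨oddStepSeq c, V, oddStepSeq_ne_zero c, memLs1_of_bounded hs0 (abs_oddStepSeq_le c), hV,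
    hLap, fun j => (oddStepSeq_eq_zero_iff hc j).2⟩
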